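/- Under the projective flatness assumption R^{f*Q}(U,V̄) = (1/q) h(U,V) Id_Q, the ambient curvature satisfies R^{Gr}(U,V̄)Z = (1/q) h(Z,V) U + (1/q) h(U,V) Z for all (1,0)-vectors U, V, Z tangent to M; consequently R^{Gr}(U,V̄)Z is tangent to M and the Codazzi equation gives ∇_{V̄} σ (U, Z) = −(R^{Gr}(U,V̄)Z)^⊥ = 0, i.e. the second fundamental form σ of M in Gr_p(ℂⁿ) is antiholomorphically parallel. -/

import Mathlib

open Matrix

/-!
Projective flatness says that `X Yᴴ` is a scalar matrix for tangent `X, Y`. The ambient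
curvature `R(U,V̄)Z = Z Vᴴ U + U Vᴴ Z` therefore collapses to a combination of `U` and `Z`,
so it is tangent, its normal part vanishes, and the Codazzi equation gives `(∇_{V̄}σ)(U,Z) = 0`.
-/

section GrassmannCurvature

variable {m n 𝕜 : Type*} [Fintype m] [Fintype n] [CommRing 𝕜] [StarRing 𝕜]

/-- `R^{Gr}(U,V̄)Z = −H_Z K_{V̄} H_U − H_U K_{V̄} H_Z` with `H_W = W` and `K_{V̄} = −Vᴴ`. -/
def grassmannCurvature (U V Z : Matrix m n 𝕜) : Matrix m n 𝕜 :=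
  -(Z * (-(Vᴴ)) * U) - (U * (-(Vᴴ)) * Z)

theorem grassmannCurvature_eq_add (U V Z : Matrix m n 𝕜) :
    grassmannCurvature U V Z = Z * Vᴴ * U + U * Vᴴ * Z := by
  simp only [grassmannCurvature, Matrix.mul_neg, Matrix.neg_mul, neg_neg, sub_neg_eq_add]

theorem grassmannCurvature_eq_smul_add_smul [DecidableEq m] {U V Z : Matrix m n 𝕜} {a b : 𝕜}
    (hUV : U * Vᴴ = a • 1) (hZV : Z * Vᴴ = b • 1) :
    grassmannCurvature U V Z = b • U + a • Z := by
  rw [grassmannCurvature_eq_add, hUV, hZV, Matrix.smul_mul, Matrix.smul_mul,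
    Matrix.one_mul, Matrix.one_mul]

end GrassmannCurvature

theorem curvature_tangent_and_sigma_antiholomorphic_parallel_general
    (p q : ℕ)
    (TM : Submodule ℂ (Matrix (Fin q) (Fin p) ℂ))
    (perp : Matrix (Fin q) (Fin p) ℂ →ₗ[ℂ] Matrix (Fin q) (Fin p) ℂ)
    (hperp : ∀ X : Matrix (Fin q) (Fin p) ℂ, perp X = 0 ↔ X ∈ TM)
    (hflat : ∀ X ∈ TM, ∀ Y ∈ TM,
      X * Yᴴ = (((q : ℂ))⁻¹ * (Yᴴ * X).trace) • (1 : Matrix (Fin q) (Fin q) ℂ))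
    (U V Z : Matrix (Fin q) (Fin p) ℂ) (hU : U ∈ TM) (hV : V ∈ TM) (hZ : Z ∈ TM)
    (nablaSigma : Matrix (Fin q) (Fin p) ℂ)
    (hCodazzi : nablaSigma = -(perp (-(Z * (-(Vᴴ)) * U) - (U * (-(Vᴴ)) * Z)))) :
    (-(Z * (-(Vᴴ)) * U) - (U * (-(Vᴴ)) * Z)
        = (((q : ℂ))⁻¹ * (Vᴴ * Z).trace) • U + (((q : ℂ))⁻¹ * (Vᴴ * U).trace) • Z) ∧
      (-(Z * (-(Vᴴ)) * U) - (U * (-(Vᴴ)) * Z)) ∈ TM ∧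
      nablaSigma = 0 := by
  have hformula : grassmannCurvature U V Z
      = (((q : ℂ))⁻¹ * (Vᴴ * Z).trace) • U + (((q : ℂ))⁻¹ * (Vᴴ * U).trace) • Z :=
    grassmannCurvature_eq_smul_add_smul (hflat U hU V hV) (hflat Z hZ V hV)
  have htangent : grassmannCurvature U V Z ∈ TM := by
    rw [hformula]
    exact TM.add_mem (TM.smul_mem _ hU) (TM.smul_mem _ hZ)
  refine ⟨hformula, htangent, ?_⟩
  rw [hCodazzi, neg_eq_zero]
  exact (hperp _).mpr htangent

/-- Lemma 3.3: Under projective flatness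
`R^{f*Q}(U,V̄) = (1/q) h(U,V) Id_Q`, the ambient curvature satisfies
`R^{Gr}(U,V̄)Z = (1/q) h(Z,V) U + (1/q) h(U,V) Z` for `(1,0)`-vectors `U, V, Z` tangent
to `M`; consequently `R^{Gr}(U,V̄)Z` is tangent to `M` and, by the Codazzi equation
`(∇_{V̄}σ)(U,Z) = −(R^{Gr}(U,V̄)Z)^⊥`, the second fundamental form is
antiholomorphically parallel: `(∇_{V̄}σ)(U,Z) = 0`.

Pointwise formalization: ambient `(1,0)`-vectors are `q × p` matrices (`H_W = W`,
`K_{V̄} = −Vᴴ`), `TM` is the holomorphic tangent space of `M`, `perp` is the projection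
onto the normal complement (so `perp X = 0 ↔ X ∈ TM`), `h(X,Y) = tr(Yᴴ X)`, projective
flatness reads `−H_X K_{Ȳ} = X Yᴴ = (1/q) h(X,Y) Id` for `X, Y ∈ TM`, and
`R^{Gr}(U,V̄)Z = −H_Z K_{V̄} H_U − H_U K_{V̄} H_Z`. -/
theorem curvature_tangent_and_sigma_antiholomorphic_parallel
    (p q : ℕ) (hq : 0 < q)
    (TM : Submodule ℂ (Matrix (Fin q) (Fin p) ℂ))
    (perp : Matrix (Fin q) (Fin p) ℂ →ₗ[ℂ] Matrix (Fin q) (Fin p) ℂ)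
    (hperp : ∀ X : Matrix (Fin q) (Fin p) ℂ, perp X = 0 ↔ X ∈ TM)
    (hflat : ∀ X ∈ TM, ∀ Y ∈ TM,
      X * Yᴴ = (((q : ℂ))⁻¹ * (Yᴴ * X).trace) • (1 : Matrix (Fin q) (Fin q) ℂ))
    (U V Z : Matrix (Fin q) (Fin p) ℂ) (hU : U ∈ TM) (hV : V ∈ TM) (hZ : Z ∈ TM)
    (nablaSigma : Matrix (Fin q) (Fin p) ℂ)
    (hCodazzi : nablaSigma = -(perp (-(Z * (-(Vᴴ)) * U) - (U * (-(Vᴴ)) * Z)))) :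
    (-(Z * (-(Vᴴ)) * U) - (U * (-(Vᴴ)) * Z)
        = (((q : ℂ))⁻¹ * (Vᴴ * Z).trace) • U + (((q : ℂ))⁻¹ * (Vᴴ * U).trace) • Z) ∧
      (-(Z * (-(Vᴴ)) * U) - (U * (-(Vᴴ)) * Z)) ∈ TM ∧
      nablaSigma = 0 :=
  curvature_tangent_and_sigma_antiholomorphic_parallel_general p q TM perp hperp hflat U V Z hU hV
    hZ nablaSigma hCodazzi
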